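/- Let X₀, X₁, X₂ be independent integrable random vectors in ℝ^d on a probability space, and set Z₁ := X₀ + X₁, Z₂ := X₀ + X₂. Let φ_k(ω) := E[e^{i ω·X_k}] for k = 0,1,2 and ψ(ω₁, ω₂) := E[e^{i ω₁·Z₁ + i ω₂·Z₂}]. Then (a) ψ(ω₁, ω₂) = φ₀(ω₁ + ω₂) φ₁(ω₁) φ₂(ω₂) for all ω₁, ω₂ ∈ ℝ^d, and (b) if ψ is nowhere vanishing, then for every ω ∈ ℝ^d: φ₀(ω) = exp( −i ω·E[X₁] + ∫₀¹ (∇₁ψ(0, αω) / ψ(0, αω)) · ω dα ), where ∇₁ denotes the gradient with respect to the first argument. -/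

import Mathlib

open MeasureTheory Complex ProbabilityTheory

noncomputable section

/-- Gradient of a `ℂ`-valued function on `ℝ^d` (equals `∇Re ξ + i ∇Im ξ` componentwise). -/
def grad {d : ℕ} (ξ : (Fin d → ℝ) → ℂ) (ω : Fin d → ℝ) : Fin d → ℂ :=
  fun j => fderiv ℝ ξ ω (Pi.single j 1)

/-- Dot product `u·v` of a real vector with a complex vector. -/
def rcDot {d : ℕ} (u : Fin d → ℝ) (v : Fin d → ℂ) : ℂ :=
  ∑ j, (u j : ℂ) * v j

/-! Part (a) is independence: the integrand of `ψ` factors as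
`e^{i(ω₁+ω₂)·X₀} e^{iω₁·X₁} e^{iω₂·X₂}`. For (b) fix `ω` and let `f t = φ₀ (t ω)`. By (a),
`ψ (t ω) (α ω) = f (t + α) φ₁ (t ω) φ₂ (α ω)`, so `(∇₁ψ(0,αω)/ψ(0,αω))·ω`, the derivative of this
at `t = 0` divided by `ψ 0 (α ω)`, is `f'(α)/f(α) + i ω·E[X₁]`. As `X₀` is integrable, `f` is `C¹`;
it does not vanish, so `f 1 = f 0 · exp ∫₀¹ f'/f` with `f 0 = 1`. -/

def charFunPi {Ω : Type*} [MeasurableSpace Ω] (μ : Measure Ω) {d : ℕ} (X : Ω → Fin d → ℝ)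
    (ω : Fin d → ℝ) : ℂ :=
  ∫ a, exp (I * ((∑ j, ω j * X a j : ℝ) : ℂ)) ∂μ

section

variable {Ω : Type*} [MeasurableSpace Ω] {μ : Measure Ω} {d : ℕ} {X : Ω → Fin d → ℝ}

lemma charFunPi_zero [IsProbabilityMeasure μ] (X : Ω → Fin d → ℝ) : charFunPi μ X 0 = 1 := by
  simp [charFunPi]

-- `Fin d → ℝ` carries the sup norm, so Mathlib's `charFun` is reached through `EuclideanSpace`.
lemma charFunPi_eq_charFun (hX : AEMeasurable X μ) (ω : Fin d → ℝ) :
    charFunPi μ X ω = charFun (μ.map fun a => WithLp.toLp 2 (X a)) (WithLp.toLp 2 ω) := by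
  rw [charFun_apply, integral_map (by fun_prop) (by fun_prop)]
  simp [charFunPi, PiLp.inner_apply, mul_comm]

lemma contDiff_charFunPi [IsFiniteMeasure μ] (hX : AEMeasurable X μ) (hi : Integrable X μ) :
    ContDiff ℝ 1 (charFunPi μ X) := by
  have hν : MemLp id 1 (μ.map fun a => WithLp.toLp 2 (X a)) := by
    rw [memLp_one_iff_integrable, integrable_map_measure (by fun_prop) (by fun_prop)]
    exact (EuclideanSpace.equiv (Fin d) ℝ).symm.toContinuousLinearMap.integrable_comp hi
  rw [funext (charFunPi_eq_charFun hX)]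
  exact (contDiff_charFun (n := 1) (by exact_mod_cast hν)).comp
    (EuclideanSpace.equiv (Fin d) ℝ).symm.contDiff

lemma charFunPi_smul_eq_charFun (hX : AEMeasurable X μ) (ω : Fin d → ℝ) (t : ℝ) :
    charFunPi μ X (t • ω) = charFun (μ.map fun a => ∑ j, ω j * X a j) t := by
  rw [charFun_apply_real, integral_map (by fun_prop) (by fun_prop)]
  simp only [charFunPi, Pi.smul_apply, smul_eq_mul]
  congr with a
  push_cast
  simp only [Finset.mul_sum, Finset.sum_mul]
  exact congrArg exp (Finset.sum_congr rfl fun j _ => by ring)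

lemma hasDerivAt_charFun_zero {ν : Measure ℝ} [IsFiniteMeasure ν] (hν : Integrable id ν) :
    HasDerivAt (charFun ν) (I * ∫ x, x ∂ν) 0 := by
  have hν' : MemLp id (1 : ℕ) ν := by exact_mod_cast memLp_one_iff_integrable.2 hν
  have hd := ((contDiff_charFun hν').differentiable one_ne_zero 0).hasDerivAt
  simpa only [← iteratedDeriv_one, iteratedDeriv_charFun_zero hν', pow_one] using hd

lemma hasDerivAt_charFunPi_smul_zero [IsFiniteMeasure μ] (hX : AEMeasurable X μ)
    (hi : Integrable X μ) (ω : Fin d → ℝ) :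
    HasDerivAt (fun t : ℝ => charFunPi μ X (t • ω))
      (I * ((∑ j, ω j * ∫ a, X a j ∂μ : ℝ) : ℂ)) 0 := by
  set Y : Ω → ℝ := fun a => ∑ j, ω j * X a j
  have hYm : AEMeasurable Y μ := by fun_prop
  have hY : Integrable Y μ := integrable_finsetSum _ fun j _ => (hi.eval j).const_mul _
  simp_rw [charFunPi_smul_eq_charFun hX]
  convert hasDerivAt_charFun_zero ((integrable_map_measure (by fun_prop) hYm).2 hY) using 2
  rw [integral_map hYm (by fun_prop), integral_finsetSum _ fun j _ => (hi.eval j).const_mul _]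
  push_cast
  simp [integral_const_mul]

lemma ProbabilityTheory.iIndepFun.integral_prod_exp_eq_prod_charFunPi {ι : Type*} [Fintype ι]
    {X : ι → Ω → Fin d → ℝ} (h : iIndepFun X μ) (hX : ∀ i, AEMeasurable (X i) μ)
    (v : ι → Fin d → ℝ) :
    ∫ a, ∏ i, exp (I * ((∑ j, v i j * X i a j : ℝ) : ℂ)) ∂μ = ∏ i, charFunPi μ (X i) (v i) :=
  h.integral_fun_prod_comp hX fun i =>
    (by fun_prop : Continuous fun x : Fin d → ℝ => exp (I * ((∑ j, v i j * x j : ℝ) : ℂ)))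
      |>.aestronglyMeasurable

lemma integral_exp_sums_eq_mul_charFunPi {X₀ X₁ X₂ : Ω → Fin d → ℝ}
    (h : iIndepFun ![X₀, X₁, X₂] μ) (hX : ∀ i, AEMeasurable (![X₀, X₁, X₂] i) μ)
    (ω₁ ω₂ : Fin d → ℝ) :
    ∫ a, exp (I * ((∑ j, ω₁ j * (X₀ a j + X₁ a j) : ℝ) : ℂ) +
        I * ((∑ j, ω₂ j * (X₀ a j + X₂ a j) : ℝ) : ℂ)) ∂μ
      = charFunPi μ X₀ (ω₁ + ω₂) * charFunPi μ X₁ ω₁ * charFunPi μ X₂ ω₂ := by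
  have := h.integral_prod_exp_eq_prod_charFunPi hX ![ω₁ + ω₂, ω₁, ω₂]
  simp only [Fin.prod_univ_three, Matrix.cons_val] at this
  rw [← this]
  congr with a
  simp only [← exp_add]
  congr 1
  simp only [Pi.add_apply, add_mul, mul_add, Finset.sum_add_distrib, ofReal_add]
  ring

lemma rcDot_div (u : Fin d → ℝ) (v : Fin d → ℂ) (c : ℂ) :
    rcDot u (fun j => v j / c) = rcDot u v / c := by
  simp only [rcDot, Finset.sum_div, mul_div_assoc]

lemma rcDot_grad (ξ : (Fin d → ℝ) → ℂ) (x u : Fin d → ℝ) :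
    rcDot u (grad ξ x) = fderiv ℝ ξ x u := by
  have hu : u = ∑ j, u j • Pi.single j (1 : ℝ) := by ext i; simp [Pi.single_apply]
  conv_rhs => rw [hu]
  simp only [rcDot, grad, map_sum, map_smul, Complex.real_smul]

lemma eq_mul_exp_integral_logDeriv {f : ℝ → ℂ} (hf : ContDiff ℝ 1 f) (hf0 : ∀ t, f t ≠ 0)
    (a b : ℝ) : f b = f a * exp (∫ t in a..b, logDeriv f t) := by
  have hcont : Continuous (logDeriv f) := (hf.continuous_deriv le_rfl).div hf.continuous hf0
  set L : ℝ → ℂ := fun s => ∫ t in a..s, logDeriv f t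
  have hL : ∀ s, HasDerivAt L (logDeriv f s) s := fun s =>
    intervalIntegral.integral_hasDerivAt_right (hcont.intervalIntegrable _ _)
      (hcont.stronglyMeasurableAtFilter _ _) hcont.continuousAt
  have hconst : ∀ s, HasDerivAt (fun s => f s * exp (-L s)) 0 s := by
    intro s
    refine ((hf.differentiable one_ne_zero s).hasDerivAt.mul (hL s).neg.cexp).congr_deriv ?_
    rw [logDeriv_apply]
    have := hf0 s
    field_simp
    ring
  have := is_const_of_deriv_eq_zero (fun s => (hconst s).differentiableAt)
      (fun s => (hconst s).deriv) b a
  simp only [L, intervalIntegral.integral_same, neg_zero, exp_zero, mul_one] at this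
  rw [← this, mul_assoc, ← exp_add, neg_add_cancel, exp_zero, mul_one]

lemma rcDot_grad_div_eq_logDeriv_add {φ₀ φ₁ φ₂ : (Fin d → ℝ) → ℂ}
    {ψ : (Fin d → ℝ) → (Fin d → ℝ) → ℂ} (hψ : ∀ w v, ψ w v = φ₀ (w + v) * φ₁ w * φ₂ v)
    (h₀ : Differentiable ℝ φ₀) (h₁ : Differentiable ℝ φ₁) (hφ₁ : φ₁ 0 = 1)
    (ω : Fin d → ℝ) (α : ℝ) (hne : ψ 0 (α • ω) ≠ 0) :
    rcDot ω (fun j => grad (fun w => ψ w (α • ω)) 0 j / ψ 0 (α • ω))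
      = logDeriv (fun t : ℝ => φ₀ (t • ω)) α + deriv (fun t : ℝ => φ₁ (t • ω)) 0 := by
  set f₀ : ℝ → ℂ := fun t => φ₀ (t • ω)
  set f₁ : ℝ → ℂ := fun t => φ₁ (t • ω)
  have hf₀ : Differentiable ℝ f₀ := by fun_prop
  have hf₁ : Differentiable ℝ f₁ := by fun_prop
  have hξ : DifferentiableAt ℝ (fun w => ψ w (α • ω)) 0 := by
    simp_rw [hψ]; fun_prop
  have hline : (fun t : ℝ => ψ (0 + t • ω) (α • ω))
      = fun t => f₀ (t + α) * f₁ t * φ₂ (α • ω) := by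
    ext t; simp [hψ, f₀, f₁, add_smul]
  have hd : HasDerivAt (fun t : ℝ => ψ (0 + t • ω) (α • ω))
      ((deriv f₀ α * f₁ 0 + f₀ α * deriv f₁ 0) * φ₂ (α • ω)) 0 := by
    rw [hline]
    have h₀α : HasDerivAt (fun t => f₀ (t + α)) (deriv f₀ α) 0 :=
      HasDerivAt.comp_add_const 0 α (by rw [zero_add]; exact (hf₀ α).hasDerivAt)
    refine ((h₀α.mul (hf₁ 0).hasDerivAt).mul_const _).congr_deriv ?_
    rw [zero_add]
  rw [rcDot_div, rcDot_grad, ← hξ.lineDeriv_eq_fderiv, lineDeriv, hd.deriv, logDeriv_apply]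
  have h0 : ψ 0 (α • ω) = f₀ α * φ₂ (α • ω) := by simp [hψ, f₀, hφ₁]
  have hf1 : f₁ 0 = 1 := by simp [f₁, hφ₁]
  rw [h0] at hne
  rw [h0, hf1]
  field_simp [left_ne_zero_of_mul hne, right_ne_zero_of_mul hne]

end

theorem multivariate_kotlarski_general
    (d : ℕ)
    (Ω : Type*) [MeasurableSpace Ω] (μ : Measure Ω) [IsProbabilityMeasure μ]
    (X₀ X₁ X₂ : Ω → Fin d → ℝ)
    (hX₀ : Measurable X₀) (hX₁ : Measurable X₁) (hX₂ : Measurable X₂)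
    (hindep : iIndepFun ![X₀, X₁, X₂] μ)
    (hint₀ : Integrable X₀ μ) (hint₁ : Integrable X₁ μ)
    (φ₀ φ₁ φ₂ : (Fin d → ℝ) → ℂ)
    (hφ₀ : ∀ ω : Fin d → ℝ,
      φ₀ ω = ∫ a, Complex.exp (Complex.I * ((∑ j, ω j * X₀ a j : ℝ) : ℂ)) ∂μ)
    (hφ₁ : ∀ ω : Fin d → ℝ,
      φ₁ ω = ∫ a, Complex.exp (Complex.I * ((∑ j, ω j * X₁ a j : ℝ) : ℂ)) ∂μ)
    (hφ₂ : ∀ ω : Fin d → ℝ,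
      φ₂ ω = ∫ a, Complex.exp (Complex.I * ((∑ j, ω j * X₂ a j : ℝ) : ℂ)) ∂μ)
    (ψ : (Fin d → ℝ) → (Fin d → ℝ) → ℂ)
    (hψ : ∀ ω₁ ω₂ : Fin d → ℝ,
      ψ ω₁ ω₂ = ∫ a, Complex.exp
        (Complex.I * ((∑ j, ω₁ j * (X₀ a j + X₁ a j) : ℝ) : ℂ) +
         Complex.I * ((∑ j, ω₂ j * (X₀ a j + X₂ a j) : ℝ) : ℂ)) ∂μ) :
    (∀ ω₁ ω₂ : Fin d → ℝ, ψ ω₁ ω₂ = φ₀ (ω₁ + ω₂) * φ₁ ω₁ * φ₂ ω₂) ∧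
    ((∀ ω₁ ω₂ : Fin d → ℝ, ψ ω₁ ω₂ ≠ 0) →
      ∀ ω : Fin d → ℝ,
        φ₀ ω = Complex.exp
          (-Complex.I * ((∑ j, ω j * (∫ a, X₁ a j ∂μ) : ℝ) : ℂ) +
            ∫ α in (0:ℝ)..1,
              rcDot ω (fun j => grad (fun w => ψ w (α • ω)) 0 j / ψ 0 (α • ω)))) := by
  have hX : ∀ i, AEMeasurable (![X₀, X₁, X₂] i) μ := by
    intro i
    fin_cases i
    exacts [hX₀.aemeasurable, hX₁.aemeasurable, hX₂.aemeasurable]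
  have hfac : ∀ ω₁ ω₂, ψ ω₁ ω₂ = φ₀ (ω₁ + ω₂) * φ₁ ω₁ * φ₂ ω₂ := fun ω₁ ω₂ => by
    rw [hψ, integral_exp_sums_eq_mul_charFunPi hindep hX, hφ₀, hφ₁, hφ₂]
    rfl
  refine ⟨hfac, fun hne ω => ?_⟩
  obtain rfl : φ₀ = charFunPi μ X₀ := funext hφ₀
  obtain rfl : φ₁ = charFunPi μ X₁ := funext hφ₁
  have h₀ := contDiff_charFunPi hX₀.aemeasurable hint₀
  have h₁ := contDiff_charFunPi hX₁.aemeasurable hint₁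
  set f : ℝ → ℂ := fun t => charFunPi μ X₀ (t • ω)
  have hf : ContDiff ℝ 1 f := h₀.comp (contDiff_id.smul contDiff_const)
  have hf_ne : ∀ t, f t ≠ 0 := fun t h => hne 0 (t • ω) (by simp [hfac, f, h])
  have hrc : ∀ α : ℝ, rcDot ω (fun j => grad (fun w => ψ w (α • ω)) 0 j / ψ 0 (α • ω))
      = logDeriv f α + I * ((∑ j, ω j * ∫ a, X₁ a j ∂μ : ℝ) : ℂ) := fun α => by
    rw [rcDot_grad_div_eq_logDeriv_add hfac (h₀.differentiable one_ne_zero)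
      (h₁.differentiable one_ne_zero) (charFunPi_zero X₁) ω α (hne _ _),
      (hasDerivAt_charFunPi_smul_zero hX₁.aemeasurable hint₁ ω).deriv]
  calc charFunPi μ X₀ ω = f 1 := by simp [f]
    _ = f 0 * exp (∫ α in (0:ℝ)..1, logDeriv f α) := eq_mul_exp_integral_logDeriv hf hf_ne 0 1
    _ = _ := by
      have hint : IntervalIntegrable (logDeriv f) volume 0 1 :=
        ((hf.continuous_deriv le_rfl).div hf.continuous hf_ne).intervalIntegrable _ _
      simp_rw [hrc]
      rw [intervalIntegral.integral_add hint intervalIntegrable_const]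
      simp [f, charFunPi_zero]

/-- **Multivariate Kotlarski.**
Let `X₀, X₁, X₂` be independent integrable random vectors in `ℝ^d`, `Z₁ = X₀ + X₁`,
`Z₂ = X₀ + X₂`, `φ_k(ω) = E[e^{iω·X_k}]`, `ψ(ω₁,ω₂) = E[e^{iω₁·Z₁ + iω₂·Z₂}]`. Then
(a) `ψ(ω₁,ω₂) = φ₀(ω₁+ω₂) φ₁(ω₁) φ₂(ω₂)`, and (b) if `ψ` is nowhere vanishing then
`φ₀(ω) = exp (-i ω·E[X₁] + ∫₀¹ (∇₁ψ(0,αω)/ψ(0,αω)) · ω dα)`. -/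
theorem multivariate_kotlarski
    (d : ℕ)
    (Ω : Type*) [MeasurableSpace Ω] (μ : Measure Ω) [IsProbabilityMeasure μ]
    (X₀ X₁ X₂ : Ω → Fin d → ℝ)
    (hX₀ : Measurable X₀) (hX₁ : Measurable X₁) (hX₂ : Measurable X₂)
    (hindep : iIndepFun ![X₀, X₁, X₂] μ)
    (hint₀ : Integrable X₀ μ) (hint₁ : Integrable X₁ μ) (hint₂ : Integrable X₂ μ)
    (φ₀ φ₁ φ₂ : (Fin d → ℝ) → ℂ)
    (hφ₀ : ∀ ω : Fin d → ℝ,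
      φ₀ ω = ∫ a, Complex.exp (Complex.I * ((∑ j, ω j * X₀ a j : ℝ) : ℂ)) ∂μ)
    (hφ₁ : ∀ ω : Fin d → ℝ,
      φ₁ ω = ∫ a, Complex.exp (Complex.I * ((∑ j, ω j * X₁ a j : ℝ) : ℂ)) ∂μ)
    (hφ₂ : ∀ ω : Fin d → ℝ,
      φ₂ ω = ∫ a, Complex.exp (Complex.I * ((∑ j, ω j * X₂ a j : ℝ) : ℂ)) ∂μ)
    (ψ : (Fin d → ℝ) → (Fin d → ℝ) → ℂ)
    (hψ : ∀ ω₁ ω₂ : Fin d → ℝ,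
      ψ ω₁ ω₂ = ∫ a, Complex.exp
        (Complex.I * ((∑ j, ω₁ j * (X₀ a j + X₁ a j) : ℝ) : ℂ) +
         Complex.I * ((∑ j, ω₂ j * (X₀ a j + X₂ a j) : ℝ) : ℂ)) ∂μ) :
    (∀ ω₁ ω₂ : Fin d → ℝ, ψ ω₁ ω₂ = φ₀ (ω₁ + ω₂) * φ₁ ω₁ * φ₂ ω₂) ∧
    ((∀ ω₁ ω₂ : Fin d → ℝ, ψ ω₁ ω₂ ≠ 0) →
      ∀ ω : Fin d → ℝ,
        φ₀ ω = Complex.exp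
          (-Complex.I * ((∑ j, ω j * (∫ a, X₁ a j ∂μ) : ℝ) : ℂ) +
            ∫ α in (0:ℝ)..1,
              rcDot ω (fun j => grad (fun w => ψ w (α • ω)) 0 j / ψ 0 (α • ω)))) :=
  multivariate_kotlarski_general d Ω μ X₀ X₁ X₂ hX₀ hX₁ hX₂ hindep hint₀ hint₁ φ₀ φ₁ φ₂ hφ₀ hφ₁ hφ₂
    ψ hψ
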